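/- Let G be a finite nilpotent group, w a surjective word map on G in variables x₁,…,xₙ, and c a word with parameters from G lying in the commutator subgroup (of the free product of G with the free group). Then the equation w(x₁,…,xₙ) = c(x₁,…,xₙ) has exactly |G|^(n-1) solutions in Gⁿ. -/

import Mathlib

/-- The map `Gⁿ → G` induced by a word with parameters from `G`
(an element of the free product `G ∗ F⟨x₁,…,xₙ⟩`). -/
def paramWordMap {G : Type*} [Group G] {n : ℕ}
    (w : Monoid.Coprod G (FreeGroup (Fin n))) (v : Fin n → G) : G :=
  Monoid.Coprod.lift (MonoidHom.id G) (FreeGroup.lift v) w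

/-!
Induct on `G` through its quotient by the centre `Z`. Multiplying a tuple `v` by a central tuple
`z` multiplies `w(v)` by `w(z)` and leaves `c(v)` unchanged, since `c` is a product of
commutators; so over each solution in `G ⧸ Z` lie exactly the `z` for which `w(z)` is a
prescribed element of `Z`. On the abelian group `Z` the word map is the homomorphism
`z ↦ ∏ zᵢ ^ eᵢ` (`eᵢ` the exponent sums of `w`), which is onto unless a prime dividing `|Z|`
divides every `eᵢ`. That is excluded because `w` is surjective on the abelianization of `G`, and
for nilpotent `G` every prime dividing `|G|` divides the order of the abelianization. So each
fibre has `|Z| ^ (n - 1)` elements.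
-/

open Monoid (Coprod)
open Subgroup (center)
open scoped IsMulCommutative

namespace FreeGroup

variable {ι : Type*}

section ExpSum

variable [DecidableEq ι]

def expSum (i : ι) (u : FreeGroup ι) : ℤ :=
  (lift (fun j => Multiplicative.ofAdd ((Pi.single i 1 : ι → ℤ) j)) u).toAdd

@[simp] lemma expSum_of (i j : ι) : expSum i (of j) = (Pi.single i 1 : ι → ℤ) j := by
  simp [expSum]

@[simp] lemma expSum_mul (i : ι) (u u' : FreeGroup ι) :
    expSum i (u * u') = expSum i u + expSum i u' := by
  simp [expSum]

@[simp] lemma expSum_inv (i : ι) (u : FreeGroup ι) : expSum i u⁻¹ = -expSum i u := by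
  simp [expSum]

lemma lift_eq_prod_zpow_expSum [Fintype ι] {C : Type*} [CommGroup C] (z : ι → C)
    (u : FreeGroup ι) : lift z u = ∏ i, z i ^ expSum i u := by
  induction u using FreeGroup.induction_on with
  | C1 => simp [expSum]
  | of j => simp [Pi.single_apply]
  | inv_of j h => simp [h]
  | mul u u' hu hu' => simp [hu, hu', zpow_add, Finset.prod_mul_distrib]

lemma lift_mulSingle [Fintype ι] {C : Type*} [CommGroup C] (u : FreeGroup ι) (i : ι) (ζ : C) :
    lift (Pi.mulSingle i ζ) u = ζ ^ expSum i u := by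
  simp [lift_eq_prod_zpow_expSum, Pi.mulSingle_apply]

end ExpSum

variable [Fintype ι] {C : Type*} [CommGroup C]

def wordHom (u : FreeGroup ι) : (ι → C) →* C where
  toFun z := lift z u
  map_one' := by classical simp [lift_eq_prod_zpow_expSum]
  map_mul' z z' := by
    classical simp [lift_eq_prod_zpow_expSum, mul_zpow, Finset.prod_mul_distrib]

lemma surjective_lift_iff [DecidableEq ι] [Finite C] (u : FreeGroup ι) :
    Function.Surjective (fun z : ι → C => lift z u) ↔
      ∀ p : ℕ, p.Prime → p ∣ Nat.card C → ∃ i, ¬ (p : ℤ) ∣ expSum i u := by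
  constructor
  · -- If `p` divides every exponent sum, every value is a `p`-th power; but `x ↦ x ^ p` is not
    -- onto, as it kills an element of order `p`.
    intro hsurj p hp hpC
    have := Fact.mk hp
    by_contra! hdvd
    choose k hk using hdvd
    have hpow : Function.Surjective (powMonoidHom p : C →* C) := fun a => by
      obtain ⟨z, rfl⟩ := hsurj a
      refine ⟨∏ i, z i ^ k i, ?_⟩
      change _ = lift z u
      rw [powMonoidHom_apply, lift_eq_prod_zpow_expSum, ← Finset.prod_pow]
      exact Finset.prod_congr rfl fun i _ => by rw [hk, mul_comm, zpow_mul, zpow_natCast]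
    obtain ⟨x, hx⟩ := exists_prime_orderOf_dvd_card' p hpC
    have : x = 1 := Finite.injective_iff_surjective.mpr hpow (by simp [← hx, pow_orderOf_eq_one])
    exact hp.one_lt.ne (by simp [← hx, this])
  · -- An element of order `p` in the cokernel of `wordHom u` forces `p ∣ expSum i u` for all `i`.
    intro h
    by_contra hns
    set H := (wordHom u : (ι → C) →* C).range
    have hH : H.index ≠ 1 := by
      rwa [Ne, Subgroup.index_eq_one, MonoidHom.range_eq_top]
    obtain ⟨p, hp, hpH⟩ := Nat.exists_prime_and_dvd hH
    have := Fact.mk hp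
    obtain ⟨x, hx⟩ := exists_prime_orderOf_dvd_card' (G := C ⧸ H) p hpH
    obtain ⟨i, hi⟩ := h p hp (hpH.trans H.index_dvd_card)
    obtain ⟨ζ, rfl⟩ := QuotientGroup.mk_surjective x
    refine hi (hx ▸ orderOf_dvd_iff_zpow_eq_one.mpr ?_)
    rw [← QuotientGroup.mk_zpow, QuotientGroup.eq_one_iff, ← lift_mulSingle u i]
    exact ⟨_, rfl⟩

end FreeGroup

lemma Abelianization.map_surjective {G H : Type*} [Group G] [Group H] {f : G →* H}
    (hf : Function.Surjective f) : Function.Surjective (Abelianization.map f) := by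
  intro y
  obtain ⟨h, rfl⟩ := QuotientGroup.mk_surjective y
  obtain ⟨g, rfl⟩ := hf h
  exact ⟨of g, rfl⟩

lemma IsPGroup.prime_dvd_card_abelianization {p : ℕ} [Fact p.Prime] {P : Type*} [Group P]
    [Finite P] [Nontrivial P] (hP : IsPGroup p P) : p ∣ Nat.card (Abelianization P) := by
  have := hP.isNilpotent
  have hne : Nat.card (Abelianization P) ≠ 1 := by
    change (commutator P).index ≠ 1
    rw [Ne, Subgroup.index_eq_one]
    exact (Group.IsSolvable.commutator_lt_top_of_nontrivial P).ne
  obtain ⟨k, hk⟩ := IsPGroup.iff_card.mp (hP.to_quotient (commutator P))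
  change Nat.card (Abelianization P) = p ^ k at hk
  rw [hk] at hne ⊢
  exact dvd_pow_self p (by rintro rfl; exact hne rfl)

lemma Group.IsNilpotent.prime_dvd_card_abelianization {G : Type*} [Group G] [Finite G]
    [Group.IsNilpotent G] {p : ℕ} [hp : Fact p.Prime] (h : p ∣ Nat.card G) :
    p ∣ Nat.card (Abelianization G) := by
  let P : Sylow p G := default
  have : Nontrivial P := (P : Subgroup G).nontrivial_iff_ne_bot.mpr (P.ne_bot_of_dvd_card h)
  obtain ⟨e⟩ := (Group.isNilpotent_of_finite_tfae (G := G)).out 0 4 |>.mp ‹_›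
  let f : G →* P := (Pi.evalMonoidHom _ P).comp <|
    (Pi.evalMonoidHom _ ⟨p, Nat.mem_primeFactors.mpr ⟨hp.out, h, Nat.card_pos.ne'⟩⟩).comp
      e.symm.toMonoidHom
  have hf : Function.Surjective f :=
    (Function.surjective_eval _).comp ((Function.surjective_eval _).comp e.symm.surjective)
  exact P.isPGroup'.prime_dvd_card_abelianization.trans
    (Subgroup.card_dvd_of_surjective _ (Abelianization.map_surjective hf))

lemma MonoidHom.map_mem_commutator {M N : Type*} [Group M] [Group N] (f : M →* N) {c : M}
    (hc : c ∈ commutator M) : f c ∈ commutator N := by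
  rw [← Abelianization.ker_of, MonoidHom.mem_ker] at hc ⊢
  rw [← Abelianization.map_of, hc, map_one]

lemma MonoidHom.card_ker_of_surjective_pi {ι A : Type*} [Fintype ι] [Group A] [Finite A]
    {f : (ι → A) →* A} (hf : Function.Surjective f) :
    Nat.card f.ker = Nat.card A ^ (Fintype.card ι - 1) := by
  have h := f.ker.card_mul_index
  rw [Subgroup.index_ker, f.range_eq_top.mpr hf, Subgroup.card_top, Nat.card_fun,
    Nat.card_eq_fintype_card (α := ι)] at h
  rcases Nat.eq_zero_or_pos (Fintype.card ι) with h0 | hpos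
  · rw [h0, pow_zero] at h ⊢
    exact Nat.eq_one_of_mul_eq_one_right h
  · rw [← Nat.sub_add_cancel hpos, pow_succ] at h
    exact Nat.eq_of_mul_eq_mul_right Nat.card_pos h

lemma Nat.card_eq_mul_of_forall_card_fiber {α β : Type*} [Finite α] [Finite β] (f : α → β)
    {k : ℕ} (h : ∀ b, Nat.card {a // f a = b} = k) : Nat.card α = Nat.card β * k := by
  have := Fintype.ofFinite β
  rw [← Nat.card_congr (Equiv.sigmaFiberEquiv f), Nat.card_sigma]
  simp [h, Nat.card_eq_fintype_card]

namespace FreeGroup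

variable {ι : Type*}

lemma lift_comp_apply {G H : Type*} [Group G] [Group H] (f : G →* H) (v : ι → G)
    (w : FreeGroup ι) : lift (f ∘ v) w = f (lift v w) :=
  (lift_unique (f.comp (lift v)) fun _ => by simp).symm

lemma surjective_lift_of_surjective {G H : Type*} [Group G] [Group H] {f : G →* H}
    (hf : Function.Surjective f) {w : FreeGroup ι}
    (hw : Function.Surjective fun v : ι → G => lift v w) :
    Function.Surjective fun v : ι → H => lift v w := by
  intro h
  obtain ⟨g, rfl⟩ := hf h
  obtain ⟨v, rfl⟩ := hw g
  exact ⟨f ∘ v, lift_comp_apply f v w⟩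

lemma surjective_lift_center [Fintype ι] {G : Type*} [Group G] [Finite G] [Group.IsNilpotent G]
    {w : FreeGroup ι} (hw : Function.Surjective fun v : ι → G => lift v w) :
    Function.Surjective fun z : ι → center G => lift z w := by
  classical
  have hab := surjective_lift_of_surjective (f := Abelianization.of (G := G))
    QuotientGroup.mk_surjective hw
  rw [surjective_lift_iff] at hab ⊢
  intro p hp hpZ
  have := Fact.mk hp
  exact hab p hp (Group.IsNilpotent.prime_dvd_card_abelianization
    (hpZ.trans (Subgroup.card_subgroup_dvd_card _)))

end FreeGroup

section ParamWord

variable {G : Type*} [Group G] {n : ℕ}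

lemma paramWordMap_inr (w : FreeGroup (Fin n)) (v : Fin n → G) :
    paramWordMap (Coprod.inr w) v = FreeGroup.lift v w :=
  Coprod.lift_apply_inr _ _ _

lemma map_paramWordMap {H : Type*} [Group H] (f : G →* H) (c : Coprod G (FreeGroup (Fin n)))
    (v : Fin n → G) :
    f (paramWordMap c v) = paramWordMap (Coprod.map f (MonoidHom.id _) c) (f ∘ v) := by
  have h : f.comp (Coprod.lift (MonoidHom.id G) (FreeGroup.lift v)) =
      (Coprod.lift (MonoidHom.id H) (FreeGroup.lift (f ∘ v))).comp
        (Coprod.map f (MonoidHom.id _)) := by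
    apply Coprod.hom_ext <;> ext <;> simp
  exact DFunLike.congr_fun h c

lemma paramWordMap_mul_center (u : Coprod G (FreeGroup (Fin n))) (v : Fin n → G)
    (z : Fin n → center G) :
    paramWordMap u (fun i => v i * z i) =
      paramWordMap u v * (Coprod.lift 1 (FreeGroup.lift z) u : center G) := by
  let μ : G × center G →* G := MonoidHom.noncommCoprod (MonoidHom.id G) (center G).subtype
    fun g ζ => show Commute (MonoidHom.id G g) ((center G).subtype ζ) from
      Subgroup.mem_center_iff.mp ζ.2 g
  have h : Coprod.lift (MonoidHom.id G) (FreeGroup.lift fun i => v i * z i) =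
      μ.comp ((Coprod.lift (MonoidHom.id G) (FreeGroup.lift v)).prod
        (Coprod.lift 1 (FreeGroup.lift z))) := by
    apply Coprod.hom_ext <;> ext <;> simp [μ]
  exact DFunLike.congr_fun h u

lemma paramWordMap_mul_center_of_mem_commutator {c : Coprod G (FreeGroup (Fin n))}
    (hc : c ∈ commutator (Coprod G (FreeGroup (Fin n)))) (v : Fin n → G)
    (z : Fin n → center G) :
    paramWordMap c (fun i => v i * z i) = paramWordMap c v := by
  rw [paramWordMap_mul_center, Abelianization.commutator_subset_ker _ hc, OneMemClass.coe_one,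
    mul_one]

lemma FreeGroup.lift_mul_center (w : FreeGroup (Fin n)) (v : Fin n → G)
    (z : Fin n → center G) :
    lift (fun i => v i * z i) w = lift v w * lift z w := by
  simpa [paramWordMap_inr] using paramWordMap_mul_center (Coprod.inr w) v z

def solutionSet (w : FreeGroup (Fin n)) (c : Coprod G (FreeGroup (Fin n))) : Set (Fin n → G) :=
  {v | FreeGroup.lift v w = paramWordMap c v}

lemma mul_center_mem_solutionSet_iff {w : FreeGroup (Fin n)} {c : Coprod G (FreeGroup (Fin n))}
    (hc : c ∈ commutator (Coprod G (FreeGroup (Fin n)))) (v : Fin n → G)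
    (z : Fin n → center G) :
    (fun i => v i * z i) ∈ solutionSet w c ↔
      (FreeGroup.lift z w : G) = (FreeGroup.lift v w)⁻¹ * paramWordMap c v := by
  rw [solutionSet, Set.mem_ofPred_eq, FreeGroup.lift_mul_center,
    paramWordMap_mul_center_of_mem_commutator hc, eq_inv_mul_iff_mul_eq]

lemma comp_mem_solutionSet {H : Type*} [Group H] (f : G →* H) {w : FreeGroup (Fin n)}
    {c : Coprod G (FreeGroup (Fin n))} {v : Fin n → G} (hv : v ∈ solutionSet w c) :
    f ∘ v ∈ solutionSet w (Coprod.map f (MonoidHom.id _) c) := by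
  rw [solutionSet, Set.mem_ofPred_eq, FreeGroup.lift_comp_apply, ← map_paramWordMap]
  exact congrArg f hv

end ParamWord

section CenterQuotient

open FreeGroup QuotientGroup

variable {G : Type*} [Group G] [Finite G] {n : ℕ} {w : FreeGroup (Fin n)}
  {c : Coprod G (FreeGroup (Fin n))}

lemma card_solutionSet_fiber_quotientCenter
    (hc : c ∈ commutator (Coprod G (FreeGroup (Fin n))))
    (hZ : Function.Surjective fun z : Fin n → center G => lift z w) {s : Fin n → G ⧸ center G}
    (hs : s ∈ solutionSet w (Coprod.map (mk' (center G)) (MonoidHom.id _) c)) :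
    Nat.card {v : solutionSet w c // (fun i => (v.1 i : G ⧸ center G)) = s} =
      Nat.card (center G) ^ (n - 1) := by
  let v₀ : Fin n → G := fun i => (s i).out
  have hv₀ : mk' (center G) ∘ v₀ = s := funext fun i => out_eq' (s i)
  have ht : (lift v₀ w)⁻¹ * paramWordMap c v₀ ∈ center G := by
    rw [← hv₀, solutionSet, Set.mem_ofPred_eq, lift_comp_apply, ← map_paramWordMap] at hs
    exact QuotientGroup.eq.mp hs
  have hmem (v : Fin n → G) (hv : (fun i => (v i : G ⧸ center G)) = s) (i : Fin n) :
      (v₀ i)⁻¹ * v i ∈ center G :=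
    QuotientGroup.eq.mp ((congrFun hv₀ i).trans (congrFun hv i).symm)
  let e : {v : solutionSet w c // (fun i => (v.1 i : G ⧸ center G)) = s} ≃
      (wordHom w : (Fin n → center G) →* center G) ⁻¹' {⟨_, ht⟩} :=
    { toFun v := ⟨fun i => ⟨_, hmem v.1 v.2 i⟩, Subtype.ext <|
        (mul_center_mem_solutionSet_iff hc v₀ _).mp
          (by simpa only [mul_inv_cancel_left] using v.1.2)⟩
      invFun z := ⟨⟨fun i => v₀ i * z.1 i, (mul_center_mem_solutionSet_iff hc v₀ _).mpr
          (congrArg Subtype.val z.2)⟩, funext fun i => by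
        rw [mk_mul, (eq_one_iff _).mpr (z.1 i).2, mul_one]
        exact congrFun hv₀ i⟩
      left_inv v := Subtype.ext <| Subtype.ext <| funext fun i => mul_inv_cancel_left _ _
      right_inv z := Subtype.ext <| funext fun i => Subtype.ext <| inv_mul_cancel_left _ _ }
  rw [Nat.card_congr (e.trans (MonoidHom.fiberEquivKerOfSurjective
      (f := (wordHom w : (Fin n → center G) →* center G)) hZ _)),
    MonoidHom.card_ker_of_surjective_pi (f := wordHom w) hZ, Fintype.card_fin]

lemma card_solutionSet_eq_card_quotientCenter_mul
    (hc : c ∈ commutator (Coprod G (FreeGroup (Fin n))))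
    (hZ : Function.Surjective fun z : Fin n → center G => lift z w) :
    Nat.card (solutionSet w c) =
      Nat.card (solutionSet w (Coprod.map (mk' (center G)) (MonoidHom.id _) c)) *
        Nat.card (center G) ^ (n - 1) :=
  Nat.card_eq_mul_of_forall_card_fiber (fun v => ⟨_, comp_mem_solutionSet (mk' _) v.2⟩)
    fun s => (Nat.card_congr (Equiv.subtypeEquivRight fun _ => Subtype.ext_iff)).trans
      (card_solutionSet_fiber_quotientCenter hc hZ s.2)

end CenterQuotient

/-- For a finite nilpotent group `G`, a word `w` in `n`
variables inducing a surjective word map on `G`, and a word `c` with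
parameters from `G` lying in the commutator subgroup of the free product
`G ∗ F⟨x₁,…,xₙ⟩`, the equation `w(x̄) = c(x̄)` has exactly `|G|^(n-1)`
solutions in `Gⁿ`. -/
theorem stmt_19 (G : Type*) [Group G] [Finite G] [Group.IsNilpotent G]
    (n : ℕ) (w : FreeGroup (Fin n))
    (hsurj : Function.Surjective (fun v : Fin n → G => FreeGroup.lift v w))
    (c : Monoid.Coprod G (FreeGroup (Fin n)))
    (hc : c ∈ commutator (Monoid.Coprod G (FreeGroup (Fin n)))) :
    Nat.card {v : Fin n → G // FreeGroup.lift v w = paramWordMap c v} =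
      Nat.card G ^ (n - 1) := by
  refine Group.nilpotent_center_quotient_ind
    (P := fun G _ _ => ∀ [Finite G] (c : Coprod G (FreeGroup (Fin n))),
      Function.Surjective (fun v : Fin n → G => FreeGroup.lift v w) → c ∈ commutator _ →
        Nat.card (solutionSet w c) = Nat.card G ^ (n - 1))
    G (fun G _ _ _ c _ _ => ?_) (fun G _ _ ih _ c hsurj hc => ?_) c hsurj hc
  · have : Unique G := uniqueOfSubsingleton 1
    rw [Nat.card_unique (α := G), one_pow, Nat.card_eq_one_iff_unique]
    exact ⟨inferInstance, ⟨1, Subsingleton.elim _ _⟩⟩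
  · rw [card_solutionSet_eq_card_quotientCenter_mul hc (FreeGroup.surjective_lift_center hsurj),
      ih _ (FreeGroup.surjective_lift_of_surjective (QuotientGroup.mk'_surjective _) hsurj)
        ((Coprod.map _ _).map_mem_commutator hc),
      Subgroup.card_eq_card_quotient_mul_card_subgroup (center G), mul_pow]
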